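/- arXiv:2308.09310 — 2 statements merged into one kernel-verified Lean document; each statement's English description precedes it below -/
import Mathlib

section
/- Let f : H → ℝ be convex differentiable, α > 0, e, x ∈ H, x⁺ = prox_{αf}(x + αe), and v = ∇f(x) − e. Then for every z ∈ H: ‖x⁺ − z‖² ≤ ‖x − z‖² − 2α (f(x) − f(z)) + α²‖v‖² − 2α⟪e, z − x⟫ − α²‖∇f(x) − ∇f(x⁺)‖². -/
/-! The optimality condition of the proximal step gives `x⁺ = x + α • e - α • ∇f(x⁺)`. With
`x⁺` in this form the claimed bound is an exact identity in `H`, up to the term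
`2α (⟪∇f(x⁺), z - x⁺⟫ + ⟪∇f(x), x⁺ - x⟫)`, and the two gradient inequalities of the convex `f`
at `x⁺` and at `x` bound that term by `2α (f z - f x)`. -/

open Set

section

variable {H : Type*} [NormedAddCommGroup H] [InnerProductSpace ℝ H]

theorem norm_sub_sq_eq_of_eq_add_smul_sub_smul {x z e g u p : H} {α : ℝ}
    (hp : p = x + α • e - α • u) :
    ‖p - z‖ ^ 2 = ‖x - z‖ ^ 2 + α ^ 2 * ‖g - e‖ ^ 2 - 2 * α * inner ℝ e (z - x)
      - α ^ 2 * ‖g - u‖ ^ 2 + 2 * α * (inner ℝ u (z - p) + inner ℝ g (p - x)) := by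
  subst hp
  simp only [← real_inner_self_eq_norm_sq, inner_sub_left, inner_sub_right, inner_add_left,
    inner_add_right, real_inner_smul_left, real_inner_smul_right]
  rw [real_inner_comm x z, real_inner_comm x e, real_inner_comm x u, real_inner_comm x g,
    real_inner_comm z e, real_inner_comm z u, real_inner_comm e u, real_inner_comm e g,
    real_inner_comm u g]
  ring

variable [CompleteSpace H]

theorem ConvexOn.add_inner_le_of_hasGradientAt {s : Set H} {f : H → ℝ} (hf : ConvexOn ℝ s f)
    {a b g : H} (ha : a ∈ s) (hb : b ∈ s) (hg : HasGradientAt f g a) :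
    f a + inner ℝ g (b - a) ≤ f b := by
  let ℓ : ℝ →ᵃ[ℝ] H := AffineMap.lineMap a b
  have hline : HasDerivAt (f ∘ ℓ) (inner ℝ g (b - a)) 0 := by
    have hfa : HasFDerivAt f (InnerProductSpace.toDual ℝ H g) (ℓ 0) := by
      simpa [ℓ] using hg.hasFDerivAt
    simpa using hfa.comp_hasDerivAt (0 : ℝ) AffineMap.hasDerivAt_lineMap
  have := (hf.comp_affineMap ℓ).le_slope_of_hasDerivAt (by simpa [ℓ]) (by simpa [ℓ])
    zero_lt_one hline
  simp only [slope_def_field, Function.comp_apply, AffineMap.lineMap_apply_one,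
    AffineMap.lineMap_apply_zero, sub_zero, div_one, ℓ] at this
  linarith

theorem eq_sub_smul_of_isMinOn_add_norm_sq {f : H → ℝ} {g w p : H} {α : ℝ} (hα : α ≠ 0)
    (hg : HasGradientAt f g p)
    (hmin : IsMinOn (fun y => f y + ‖y - w‖ ^ 2 / (2 * α)) univ p) :
    p = w - α • g := by
  set d := α • g + (p - w)
  have hline : HasDerivAt (fun t : ℝ => p + t • d) d 0 := by
    simpa using ((hasDerivAt_id (0 : ℝ)).smul_const d).const_add p
  have hψ : HasDerivAt (fun t : ℝ => f (p + t • d) + ‖p + t • d - w‖ ^ 2 / (2 * α))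
      (inner ℝ g d + 2 * inner ℝ (p - w) d / (2 * α)) 0 := by
    have hf : HasDerivAt (fun t : ℝ => f (p + t • d)) (inner ℝ g d) 0 := by
      have := hg.hasFDerivAt.comp_hasDerivAt_of_eq (0 : ℝ) hline (by simp)
      simp only [InnerProductSpace.toDual_apply_apply] at this
      exact this
    have hq : HasDerivAt (fun t : ℝ => ‖p + t • d - w‖ ^ 2 / (2 * α))
        (2 * inner ℝ (p - w) d / (2 * α)) 0 := by
      simpa using (hline.sub_const w).norm_sq.div_const (2 * α)
    exact hf.fun_add hq
  have hmin0 : IsLocalMin (fun t : ℝ => f (p + t • d) + ‖p + t • d - w‖ ^ 2 / (2 * α)) 0 :=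
    Filter.Eventually.of_forall fun t => by simpa using hmin (mem_univ (p + t • d))
  have hd : inner ℝ d d = 0 := by
    have hzero := hmin0.hasDerivAt_eq_zero hψ
    simp only [d, inner_add_left, real_inner_smul_left] at hzero ⊢
    field_simp at hzero
    linarith
  linear_combination (norm := module) inner_self_eq_zero.mp hd

end

theorem stmt4 {H : Type*} [NormedAddCommGroup H] [InnerProductSpace ℝ H] [CompleteSpace H]
    (f : H → ℝ) (g : H → H)
    (hconv : ConvexOn ℝ Set.univ f)
    (hgrad : ∀ x, HasGradientAt f (g x) x)
    (α : ℝ) (hα : 0 < α) (e x xp z : H)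
    (hmin : ∀ y, f xp + ‖xp - (x + α • e)‖ ^ 2 / (2 * α) ≤
      f y + ‖y - (x + α • e)‖ ^ 2 / (2 * α))
    (v : H) (hv : v = g x - e) :
    ‖xp - z‖ ^ 2 ≤ ‖x - z‖ ^ 2 - 2 * α * (f x - f z) + α ^ 2 * ‖v‖ ^ 2
      - 2 * α * (inner ℝ e (z - x) : ℝ) - α ^ 2 * ‖g x - g xp‖ ^ 2 := by
  have hxp : xp = x + α • e - α • g xp :=
    eq_sub_smul_of_isMinOn_add_norm_sq hα.ne' (hgrad xp) fun y _ => hmin y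
  have hsupport_xp := hconv.add_inner_le_of_hasGradientAt (mem_univ xp) (mem_univ z) (hgrad xp)
  have hsupport_x := hconv.add_inner_le_of_hasGradientAt (mem_univ x) (mem_univ xp) (hgrad x)
  have hlinear : 2 * α * (inner ℝ (g xp) (z - xp) + inner ℝ (g x) (xp - x)) ≤
      2 * α * (f z - f x) :=
    mul_le_mul_of_nonneg_left (by linarith) (by positivity)
  rw [hv, norm_sub_sq_eq_of_eq_add_smul_sub_smul (g := g x) hxp]
  linarith
end

section
/- Let f_1,…,f_n : H → ℝ be convex differentiable with L-Lipschitz gradients, F = (1/n)∑f_i with minimizer x* (∇F(x*) = 0). Then for any x ∈ H, (1/n)∑_{i=1}^n ‖∇f_i(x)‖² ≤ 4L(F(x) − F(x*)) + (2/n)∑_{i=1}^n ‖∇f_i(x*)‖². -/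
/-!
For convex `f` with `L`-Lipschitz gradient, `f - ⟪∇f y, ·⟫` is minimised at `y`; comparing the
descent lemma at `x` with the first-order convexity bound at `y`, both evaluated at the gradient
step `x - (∇f x - ∇f y) / L`, gives co-coercivity
`‖∇f x - ∇f y‖² ≤ 2L (f x - f y - ⟪∇f y, x - y⟫)`.
With `‖a‖² ≤ 2‖a - b‖² + 2‖b‖²` this bounds each `‖∇fᵢ x‖²`, and summing over `i` the linear
terms `⟪∇fᵢ x*, x - x*⟫` cancel because `∑ ∇fᵢ x* = 0`.
-/

open scoped RealInnerProductSpace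
open AffineMap Finset Set

section

variable {H : Type*} [NormedAddCommGroup H] [InnerProductSpace ℝ H] [CompleteSpace H]
  {f : H → ℝ} {g : H → H}

theorem HasGradientAt.hasDerivAt_comp_lineMap {f' a b : H} {t : ℝ}
    (hf : HasGradientAt f f' (lineMap a b t)) :
    HasDerivAt (fun s : ℝ => f (lineMap a b s)) ⟪f', b - a⟫ t := by
  have hcomp := hf.hasFDerivAt.comp_hasDerivAt t hasDerivAt_lineMap
  rwa [InnerProductSpace.toDual_apply_apply] at hcomp

theorem ConvexOn.add_inner_le_of_hasGradientAt_s13 (hf : ConvexOn ℝ univ f) {f' y : H}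
    (hy : HasGradientAt f f' y) (w : H) :
    f y + ⟪f', w - y⟫ ≤ f w := by
  have hline : ConvexOn ℝ univ (fun s : ℝ => f (lineMap y w s)) := hf.comp_affineMap _
  have hderiv : HasDerivAt (fun s : ℝ => f (lineMap y w s)) ⟪f', w - y⟫ 0 :=
    HasGradientAt.hasDerivAt_comp_lineMap (by rwa [lineMap_apply_zero])
  have hslope := hline.le_slope_of_hasDerivAt (mem_univ 0) (mem_univ 1) zero_lt_one hderiv
  simp only [slope_def_field, lineMap_apply_zero, lineMap_apply_one,
    sub_zero, div_one] at hslope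
  linarith

theorem sub_sub_inner_le_of_lipschitz_gradient {L : ℝ} (hg : ∀ z, HasGradientAt f (g z) z)
    (hlip : ∀ x y, ‖g x - g y‖ ≤ L * ‖x - y‖) (z w : H) :
    f w - f z - ⟪g z, w - z⟫ ≤ L / 2 * ‖w - z‖ ^ 2 := by
  set v := w - z
  have hφ : ∀ t, HasDerivAt (fun t => f (lineMap z w t) - f z - t * ⟪g z, v⟫)
      ⟪g (lineMap z w t) - g z, v⟫ t := fun t =>
    (((hg _).hasDerivAt_comp_lineMap.sub_const (f z)).sub
      ((hasDerivAt_id t).mul_const ⟪g z, v⟫)).congr_deriv (by simp [v, inner_sub_left])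
  have hB : ∀ t, HasDerivAt (fun t => L / 2 * ‖v‖ ^ 2 * t ^ 2) (L * ‖v‖ ^ 2 * t) t := fun t =>
    ((hasDerivAt_pow 2 t).const_mul (L / 2 * ‖v‖ ^ 2)).congr_deriv (by ring)
  have hbound : ∀ t ∈ Ico (0 : ℝ) 1, ⟪g (lineMap z w t) - g z, v⟫ ≤ L * ‖v‖ ^ 2 * t := by
    rintro t ⟨ht, -⟩
    calc ⟪g (lineMap z w t) - g z, v⟫ ≤ ‖g (lineMap z w t) - g z‖ * ‖v‖ := real_inner_le_norm _ _
      _ ≤ L * ‖lineMap z w t - z‖ * ‖v‖ := by gcongr; exact hlip _ _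
      _ = L * ‖v‖ ^ 2 * t := by
        rw [← vsub_eq_sub, lineMap_vsub_left, vsub_eq_sub, norm_smul, Real.norm_of_nonneg ht]; ring
  have hcompare := image_le_of_deriv_right_le_deriv_boundary (a := 0) (b := 1)
    (fun t _ => (hφ t).continuousAt.continuousWithinAt) (fun t _ => (hφ t).hasDerivWithinAt)
    (by simp) (fun t _ => (hB t).continuousAt.continuousWithinAt)
    (fun t _ => (hB t).hasDerivWithinAt) hbound (right_mem_Icc.2 zero_le_one)
  simpa using hcompare

theorem norm_sub_gradient_sq_le {L : ℝ} (hL : 0 < L) (hf : ConvexOn ℝ univ f)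
    (hg : ∀ z, HasGradientAt f (g z) z) (hlip : ∀ x y, ‖g x - g y‖ ≤ L * ‖x - y‖) (x y : H) :
    ‖g x - g y‖ ^ 2 ≤ 2 * L * (f x - f y - ⟪g y, x - y⟫) := by
  set d := g x - g y
  set w := x - L⁻¹ • d
  have hupper := sub_sub_inner_le_of_lipschitz_gradient hg hlip x w
  have hlower := hf.add_inner_le_of_hasGradientAt_s13 (hg y) w
  have hwx : w - x = -(L⁻¹ • d) := by simp [w]
  have hwy : w - y = (x - y) - L⁻¹ • d := by simp only [w]; abel
  have hd : ⟪g x, d⟫ - ⟪g y, d⟫ = ‖d‖ ^ 2 := by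
    rw [← inner_sub_left, real_inner_self_eq_norm_sq]
  rw [hwx, norm_neg, norm_smul, Real.norm_of_nonneg (inv_nonneg.2 hL.le), inner_neg_right,
    inner_smul_right] at hupper
  rw [hwy, inner_sub_right, inner_smul_right] at hlower
  have key : ‖d‖ ^ 2 / (2 * L) ≤ f x - f y - ⟪g y, x - y⟫ := by
    have hquad : L / 2 * (L⁻¹ * ‖d‖) ^ 2 = ‖d‖ ^ 2 / (2 * L) := by field_simp
    have hlin : L⁻¹ * ⟪g x, d⟫ - L⁻¹ * ⟪g y, d⟫ = 2 * (‖d‖ ^ 2 / (2 * L)) := by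
      rw [← mul_sub, hd]; field_simp
    linarith
  rwa [div_le_iff₀ (by positivity), mul_comm] at key

theorem norm_gradient_sq_le {L : ℝ} (hL : 0 < L) (hf : ConvexOn ℝ univ f)
    (hg : ∀ z, HasGradientAt f (g z) z) (hlip : ∀ x y, ‖g x - g y‖ ≤ L * ‖x - y‖) (x y : H) :
    ‖g x‖ ^ 2 ≤ 4 * L * (f x - f y - ⟪g y, x - y⟫) + 2 * ‖g y‖ ^ 2 := by
  have hcoco := norm_sub_gradient_sq_le hL hf hg hlip x y
  calc ‖g x‖ ^ 2 ≤ (‖g x - g y‖ + ‖g y‖) ^ 2 := by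
        gcongr; exact norm_le_norm_sub_add _ _
    _ ≤ 2 * (‖g x - g y‖ ^ 2 + ‖g y‖ ^ 2) := add_sq_le
    _ ≤ 4 * L * (f x - f y - ⟪g y, x - y⟫) + 2 * ‖g y‖ ^ 2 := by linarith

end

theorem sum_norm_gradient_sq_le {H ι : Type*} [NormedAddCommGroup H] [InnerProductSpace ℝ H]
    [CompleteSpace H] [Fintype ι] {f : ι → H → ℝ} {g : ι → H → H} {L : ℝ} (hL : 0 < L)
    (hf : ∀ i, ConvexOn ℝ univ (f i)) (hg : ∀ i z, HasGradientAt (f i) (g i z) z)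
    (hlip : ∀ i x y, ‖g i x - g i y‖ ≤ L * ‖x - y‖) {y : H} (hy : ∑ i, g i y = 0) (x : H) :
    ∑ i, ‖g i x‖ ^ 2 ≤ 4 * L * (∑ i, f i x - ∑ i, f i y) + 2 * ∑ i, ‖g i y‖ ^ 2 := by
  have hinner : ∑ i, ⟪g i y, x - y⟫ = 0 := by rw [← sum_inner, hy, inner_zero_left]
  calc ∑ i, ‖g i x‖ ^ 2
      ≤ ∑ i, (4 * L * (f i x - f i y - ⟪g i y, x - y⟫) + 2 * ‖g i y‖ ^ 2) :=
        sum_le_sum fun i _ => norm_gradient_sq_le hL (hf i) (hg i) (hlip i) x y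
    _ = 4 * L * (∑ i, f i x - ∑ i, f i y) + 2 * ∑ i, ‖g i y‖ ^ 2 := by
        simp only [sum_add_distrib, ← mul_sum, sum_sub_distrib, hinner, sub_zero]

theorem stmt13_general {H : Type*} [NormedAddCommGroup H] [InnerProductSpace ℝ H] [CompleteSpace H]
    (n : ℕ) (f : Fin n → H → ℝ) (g : Fin n → H → H) (L : ℝ) (hL : 0 < L)
    (hconv : ∀ i, ConvexOn ℝ Set.univ (f i))
    (hgrad : ∀ i x, HasGradientAt (f i) (g i x) x)
    (hlip : ∀ i x y, ‖g i x - g i y‖ ≤ L * ‖x - y‖)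
    (xs : H) (hxs : (1 / (n : ℝ)) • ∑ i, g i xs = 0) (x : H) :
    (1 / (n : ℝ)) * ∑ i, ‖g i x‖ ^ 2 ≤
      4 * L * ((1 / (n : ℝ)) * ∑ i, f i x - (1 / (n : ℝ)) * ∑ i, f i xs)
        + (2 / (n : ℝ)) * ∑ i, ‖g i xs‖ ^ 2 := by
  have hsum : ∑ i, g i xs = 0 := by
    rcases n.eq_zero_or_pos with rfl | hn
    · simp
    · exact (smul_eq_zero.1 hxs).resolve_left (by positivity)
  have key := sum_norm_gradient_sq_le hL hconv hgrad hlip hsum x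
  calc (1 / (n : ℝ)) * ∑ i, ‖g i x‖ ^ 2
      ≤ (1 / (n : ℝ)) * (4 * L * (∑ i, f i x - ∑ i, f i xs) + 2 * ∑ i, ‖g i xs‖ ^ 2) := by
        gcongr
    _ = 4 * L * ((1 / (n : ℝ)) * ∑ i, f i x - (1 / (n : ℝ)) * ∑ i, f i xs)
          + (2 / (n : ℝ)) * ∑ i, ‖g i xs‖ ^ 2 := by ring

theorem stmt13 {H : Type*} [NormedAddCommGroup H] [InnerProductSpace ℝ H] [CompleteSpace H]
    (n : ℕ) (hn : 1 ≤ n) (f : Fin n → H → ℝ) (g : Fin n → H → H) (L : ℝ) (hL : 0 < L)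
    (hconv : ∀ i, ConvexOn ℝ Set.univ (f i))
    (hgrad : ∀ i x, HasGradientAt (f i) (g i x) x)
    (hlip : ∀ i x y, ‖g i x - g i y‖ ≤ L * ‖x - y‖)
    (xs : H) (hxs : (1 / (n : ℝ)) • ∑ i, g i xs = 0) (x : H) :
    (1 / (n : ℝ)) * ∑ i, ‖g i x‖ ^ 2 ≤
      4 * L * ((1 / (n : ℝ)) * ∑ i, f i x - (1 / (n : ℝ)) * ∑ i, f i xs)
        + (2 / (n : ℝ)) * ∑ i, ‖g i xs‖ ^ 2 :=
  stmt13_general n f g L hL hconv hgrad hlip xs hxs x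
end
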